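/- Let G be a connected simple graph on n ≥ 2 vertices with characteristic polynomial f (of its adjacency matrix, regarded as a complex polynomial), let 0 < p < 2 be a real number, and let g(z) = z^n − (n−1)z^{n−2} be the characteristic polynomial of the star S_n. Then the integral I = ∫₀^∞ z^{p−1} · log| f(iz) / (z^{n−2}(z² + n − 1)) | dz is nonnegative: I ≥ 0. -/

import Mathlib

open Finset MeasureTheory

/-- The eigenvalues of the (real) adjacency matrix of a simple graph on `Fin n`. -/
noncomputable def adjEigenvalues {n : ℕ} (G : SimpleGraph (Fin n)) [DecidableRel G.Adj] :
    Fin n → ℝ :=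
  Matrix.IsHermitian.eigenvalues
    ((Matrix.conjTranspose_eq_transpose_of_trivial (G.adjMatrix ℝ)).trans G.isSymm_adjMatrix)

/-- The `p`-energy of a graph: the sum of the `p`-th powers of the absolute values of the
adjacency eigenvalues. -/
noncomputable def pEnergy {n : ℕ} (G : SimpleGraph (Fin n)) [DecidableRel G.Adj] (p : ℝ) : ℝ :=
  ∑ i, |adjEigenvalues G i| ^ p

/-- The star graph on `Fin n`: vertex `0` is adjacent to all other vertices. -/
def starGraph (n : ℕ) : SimpleGraph (Fin n) where
  Adj u v := ((u : ℕ) = 0 ∨ (v : ℕ) = 0) ∧ u ≠ v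
  symm := ⟨fun _ _ h => ⟨h.1.symm, h.2.symm⟩⟩
  loopless := ⟨fun _ h => h.2 rfl⟩

instance (n : ℕ) : DecidableRel (starGraph n).Adj :=
  fun u v => inferInstanceAs (Decidable (((u : ℕ) = 0 ∨ (v : ℕ) = 0) ∧ u ≠ v))

/-!
Let `λᵢ` be the adjacency eigenvalues of `G`, so that `|f(iz)|² = ∏ᵢ (z² + λᵢ²)`, and put
`tᵢ = λᵢ²`. Then `∑ tᵢ = ∑ deg = 2m ≥ 2(n - 1)`, and each `tᵢ`, an eigenvalue of `A²`, is at most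
some row sum `∑_{l ∼ k} deg l` of `A²` (Gershgorin), hence at most `2m - (n - 1)` because the
non-neighbours of `k` carry total degree at least `n - 1`. These two facts force the second
elementary symmetric function of the `tᵢ` to be at least `(n - 1)²`, and expanding the product to
second order gives `∏ (z² + tᵢ) ≥ z^(2(n-2)) (z² + n - 1)²`. So the integrand is pointwise
nonnegative.
-/

open Finset Matrix Polynomial

theorem pow_card_mul_le_sq_mul_prod_add {ι : Type*} (s : Finset ι) {a : ℝ} (ha : 0 ≤ a)
    {t : ι → ℝ} (ht : ∀ i ∈ s, 0 ≤ t i) :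
    a ^ #s * (a ^ 2 + a * ∑ i ∈ s, t i + ((∑ i ∈ s, t i) ^ 2 - ∑ i ∈ s, t i ^ 2) / 2) ≤
      a ^ 2 * ∏ i ∈ s, (a + t i) := by
  classical
  induction s using Finset.induction_on with
  | empty => simp
  | @insert j s hj ih =>
    have ht' : ∀ i ∈ s, 0 ≤ t i := fun i hi => ht i (mem_insert_of_mem hi)
    have htj : 0 ≤ t j := ht j (mem_insert_self j s)
    have hE : 0 ≤ ((∑ i ∈ s, t i) ^ 2 - ∑ i ∈ s, t i ^ 2) / 2 := by
      have := sum_sq_le_sq_sum_of_nonneg ht'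
      linarith
    have hS : 0 ≤ ∑ i ∈ s, t i := sum_nonneg ht'
    rw [card_insert_of_notMem hj, prod_insert hj, sum_insert hj, sum_insert hj, pow_succ]
    have := mul_le_mul_of_nonneg_left (ih ht') (add_nonneg ha htj)
    have hpow : 0 ≤ a ^ #s := pow_nonneg ha _
    nlinarith [mul_nonneg (mul_nonneg hpow htj) hE, mul_nonneg (mul_nonneg hpow ha) (mul_nonneg htj hS)]

theorem sq_le_half_sq_sum_sub_sum_sq {ι : Type*} (s : Finset ι) {c : ℝ} (hc : 0 ≤ c)
    {t : ι → ℝ} (ht : ∀ i ∈ s, 0 ≤ t i) (hsum : 2 * c ≤ ∑ i ∈ s, t i)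
    (hle : ∀ i ∈ s, t i ≤ ∑ j ∈ s, t j - c) :
    c ^ 2 ≤ ((∑ i ∈ s, t i) ^ 2 - ∑ i ∈ s, t i ^ 2) / 2 := by
  have hsq : ∑ i ∈ s, t i ^ 2 ≤ (∑ j ∈ s, t j - c) * ∑ i ∈ s, t i := by
    rw [mul_sum]
    exact sum_le_sum fun i hi => by rw [sq]; exact mul_le_mul_of_nonneg_right (hle i hi) (ht i hi)
  nlinarith

theorem sq_pow_mul_sq_add_le_prod_sq_add {ι : Type*} [Fintype ι] (hι : 2 ≤ Fintype.card ι)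
    {z c : ℝ} (hz : 0 < z) (hc : 0 ≤ c) {t : ι → ℝ} (ht : ∀ i, 0 ≤ t i)
    (hsum : 2 * c ≤ ∑ i, t i) (hle : ∀ i, t i ≤ ∑ j, t j - c) :
    (z ^ (Fintype.card ι - 2) * (z ^ 2 + c)) ^ 2 ≤ ∏ i, (z ^ 2 + t i) := by
  set a := z ^ 2
  have ha : 0 < a := by positivity
  have hprod := pow_card_mul_le_sq_mul_prod_add univ ha.le fun i _ => ht i
  have he2 := sq_le_half_sq_sum_sub_sum_sq univ hc (fun i _ => ht i) hsum fun i _ => hle i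
  have hk : a ^ Fintype.card ι = a ^ (Fintype.card ι - 2) * a ^ 2 := by
    rw [← pow_add, Nat.sub_add_cancel hι]
  rw [card_univ, hk] at hprod
  refine le_of_mul_le_mul_left ?_ (pow_pos ha 2)
  calc a ^ 2 * (z ^ (Fintype.card ι - 2) * (a + c)) ^ 2
      = a ^ (Fintype.card ι - 2) * a ^ 2 * (a + c) ^ 2 := by
        rw [mul_pow, ← pow_mul, mul_comm, pow_mul]; ring
    _ ≤ a ^ (Fintype.card ι - 2) * a ^ 2 *
          (a ^ 2 + a * ∑ i, t i + ((∑ i, t i) ^ 2 - ∑ i, t i ^ 2) / 2) := by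
        gcongr
        nlinarith
    _ ≤ a ^ 2 * ∏ i, (a + t i) := hprod

section Spectral

variable {n : Type*} [Fintype n] [DecidableEq n]

theorem Matrix.IsHermitian.trace_mul_self {𝕜 : Type*} [RCLike 𝕜] {A : Matrix n n 𝕜}
    (hA : A.IsHermitian) : (A * A).trace = ∑ i, (hA.eigenvalues i : 𝕜) ^ 2 := by
  conv_lhs => rw [hA.spectral_theorem, ← map_mul, Unitary.conjStarAlgAut_apply, trace_mul_cycle,
    Unitary.coe_star_mul_self, one_mul, diagonal_mul_diagonal, trace_diagonal]
  simp [sq]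

theorem Matrix.IsHermitian.hasEigenvalue_mul_self {𝕜 : Type*} [RCLike 𝕜] {A : Matrix n n 𝕜}
    (hA : A.IsHermitian) (i : n) :
    Module.End.HasEigenvalue (toLin' (A * A)) ((hA.eigenvalues i : 𝕜) ^ 2) := by
  refine Module.End.hasEigenvalue_of_hasEigenvector (x := ⇑(hA.eigenvectorBasis i)) ⟨?_, ?_⟩
  · rw [Module.End.mem_eigenspace_iff, toLin'_apply, ← mulVec_mulVec, hA.mulVec_eigenvectorBasis,
      mulVec_smul, hA.mulVec_eigenvectorBasis, smul_smul, RCLike.real_smul_eq_coe_smul (K := 𝕜)]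
    simp [sq]
  · exact (WithLp.ofLp_eq_zero 2).ne.2 <| hA.eigenvectorBasis.orthonormal.ne_zero i

theorem Matrix.exists_le_sum_row_of_hasEigenvalue {B : Matrix n n ℝ} (hB : ∀ i j, 0 ≤ B i j)
    {μ : ℝ} (hμ : Module.End.HasEigenvalue (toLin' B) μ) : ∃ k, μ ≤ ∑ j, B k j := by
  obtain ⟨k, hk⟩ := eigenvalue_mem_ball hμ
  refine ⟨k, ?_⟩
  rw [Metric.mem_closedBall, Real.dist_eq] at hk
  rw [← add_sum_erase _ _ (mem_univ k)]
  have : ∑ j ∈ univ.erase k, ‖B k j‖ = ∑ j ∈ univ.erase k, B k j :=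
    sum_congr rfl fun j _ => Real.norm_of_nonneg (hB k j)
  linarith [le_abs_self (μ - B k k)]

theorem Matrix.IsHermitian.norm_eval_charpoly_map_I_mul_sq {A : Matrix n n ℝ} (hA : A.IsHermitian)
    (z : ℝ) :
    ‖(A.map (algebraMap ℝ ℂ)).charpoly.eval (Complex.I * z)‖ ^ 2 =
      ∏ i, (z ^ 2 + hA.eigenvalues i ^ 2) := by
  rw [charpoly_map, hA.charpoly_eq, Polynomial.eval_map, eval₂_finsetProd, norm_prod, ← prod_pow]
  refine prod_congr rfl fun i _ => ?_
  have : Complex.I * z - hA.eigenvalues i = (-hA.eigenvalues i : ℝ) + z * Complex.I := by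
    push_cast; ring
  rw [eval₂_sub, eval₂_X, eval₂_C, RCLike.ofReal_real_eq_id, id, Complex.coe_algebraMap, this,
    Complex.sq_norm, Complex.normSq_add_mul_I]
  ring

end Spectral

namespace SimpleGraph

variable {V : Type*} (G : SimpleGraph V) [DecidableRel G.Adj]

theorem adjMatrix_map_algebraMap : (G.adjMatrix ℝ).map (algebraMap ℝ ℂ) = G.adjMatrix ℂ := by
  ext i j
  by_cases h : G.Adj i j <;> simp [h]

variable [Fintype V]

theorem sum_adjMatrix_mul_self_row {α : Type*} [Semiring α] (k : V) :
    ∑ j, (G.adjMatrix α * G.adjMatrix α) k j = ∑ l ∈ G.neighborFinset k, (G.degree l : α) := by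
  have hdeg : G.adjMatrix α *ᵥ 1 = fun l => (G.degree l : α) := by
    ext l; simp
  have hrow : ∑ j, (G.adjMatrix α * G.adjMatrix α) k j =
      ((G.adjMatrix α * G.adjMatrix α) *ᵥ 1) k := by
    simp only [mulVec, dotProduct, Pi.one_apply, mul_one]
  rw [hrow, ← mulVec_mulVec, hdeg, adjMatrix_mulVec_apply]

theorem trace_adjMatrix_mul_self {α : Type*} [NonAssocSemiring α] :
    (G.adjMatrix α * G.adjMatrix α).trace = ∑ v, (G.degree v : α) := by
  simp only [trace, diag_apply, adjMatrix_mul_self_apply_self]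

variable {G} in
theorem Connected.two_mul_card_sub_one_le_sum_degrees (hG : G.Connected) :
    2 * (Fintype.card V - 1) ≤ ∑ v, G.degree v := by
  have := hG.card_vert_le_card_edgeSet_add_one
  rw [sum_degrees_eq_twice_card_edges, Nat.card_eq_fintype_card, Nat.card_eq_fintype_card,
    ← edgeFinset_card] at *
  omega

variable [DecidableEq V]

theorem card_sub_one_le_sum_degree_compl_neighborFinset (hdeg : ∀ v, 0 < G.degree v) (k : V) :
    Fintype.card V - 1 ≤ ∑ l ∈ (G.neighborFinset k)ᶜ, G.degree l := by
  have hk : k ∈ (G.neighborFinset k)ᶜ := by simp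
  have hcard : #((G.neighborFinset k)ᶜ.erase k) = Fintype.card V - 1 - G.degree k := by
    rw [card_erase_of_mem hk, card_compl, card_neighborFinset_eq_degree]
    omega
  have hones := card_nsmul_le_sum _ _ 1 fun l (_ : l ∈ (G.neighborFinset k)ᶜ.erase k) => hdeg l
  have := G.degree_lt_card_verts k
  rw [← add_sum_erase _ _ hk]
  simp only [hcard, smul_eq_mul, mul_one] at hones
  omega

theorem sum_degree_neighborFinset_add_le (hdeg : ∀ v, 0 < G.degree v) (k : V) :
    ∑ l ∈ G.neighborFinset k, G.degree l + (Fintype.card V - 1) ≤ ∑ v, G.degree v := by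
  rw [← sum_add_sum_compl (G.neighborFinset k)]
  exact Nat.add_le_add_left (G.card_sub_one_le_sum_degree_compl_neighborFinset hdeg k) _

theorem sum_sq_eigenvalues_adjMatrix :
    ∑ i, (G.isHermitian_adjMatrix ℝ).eigenvalues i ^ 2 = ∑ v, (G.degree v : ℝ) := by
  simpa using ((G.isHermitian_adjMatrix ℝ).trace_mul_self).symm.trans G.trace_adjMatrix_mul_self

theorem sq_eigenvalues_adjMatrix_le (hdeg : ∀ v, 0 < G.degree v) (i : V) :
    (G.isHermitian_adjMatrix ℝ).eigenvalues i ^ 2 ≤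
      ∑ v, (G.degree v : ℝ) - (Fintype.card V - 1) := by
  have hA0 : ∀ j k, 0 ≤ G.adjMatrix ℝ j k := fun j k => by
    rw [adjMatrix_apply]; split_ifs <;> norm_num
  have hnonneg : ∀ j k, 0 ≤ (G.adjMatrix ℝ * G.adjMatrix ℝ) j k := fun j k =>
    sum_nonneg fun l _ => mul_nonneg (hA0 j l) (hA0 l k)
  obtain ⟨k, hk⟩ := exists_le_sum_row_of_hasEigenvalue hnonneg
    (by simpa using (G.isHermitian_adjMatrix ℝ).hasEigenvalue_mul_self i)
  rw [sum_adjMatrix_mul_self_row] at hk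
  have hrow : ∑ l ∈ G.neighborFinset k, (G.degree l : ℝ) + (Fintype.card V - 1 : ℕ) ≤
      ∑ v, (G.degree v : ℝ) := by
    exact_mod_cast G.sum_degree_neighborFinset_add_le hdeg k
  rw [Nat.cast_sub (Fintype.card_pos_iff.mpr ⟨i⟩), Nat.cast_one] at hrow
  linarith

variable {G} in
theorem Connected.pow_mul_le_norm_eval_charpoly (hG : G.Connected) (hV : 2 ≤ Fintype.card V)
    {z : ℝ} (hz : 0 < z) :
    z ^ (Fintype.card V - 2) * (z ^ 2 + Fintype.card V - 1) ≤
      ‖(G.adjMatrix ℂ).charpoly.eval (Complex.I * z)‖ := by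
  have hA := G.isHermitian_adjMatrix ℝ
  have : Nontrivial V := Fintype.one_lt_card_iff_nontrivial.mp hV
  have hdeg : ∀ v, 0 < G.degree v := fun v => hG.preconnected.degree_pos_of_nontrivial v
  have hV' : (2 : ℝ) ≤ Fintype.card V := by exact_mod_cast hV
  have hsum : 2 * ((Fintype.card V : ℝ) - 1) ≤ ∑ i, hA.eigenvalues i ^ 2 := by
    have := hG.two_mul_card_sub_one_le_sum_degrees
    rw [← Nat.cast_le (α := ℝ), Nat.cast_mul, Nat.cast_sub (by omega), Nat.cast_sum] at this
    rw [G.sum_sq_eigenvalues_adjMatrix]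
    simpa using this
  have hbound := sq_pow_mul_sq_add_le_prod_sq_add hV hz (by linarith) (fun i => sq_nonneg _) hsum
    fun i => by rw [G.sum_sq_eigenvalues_adjMatrix]; exact G.sq_eigenvalues_adjMatrix_le hdeg i
  rw [← hA.norm_eval_charpoly_map_I_mul_sq, adjMatrix_map_algebraMap, ← add_sub_assoc] at hbound
  have hpos : 0 ≤ z ^ (Fintype.card V - 2) * (z ^ 2 + Fintype.card V - 1) :=
    mul_nonneg (by positivity) (by nlinarith)
  exact (pow_le_pow_iff_left₀ hpos (norm_nonneg _) two_ne_zero).mp hbound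

end SimpleGraph

theorem integral_log_ratio_nonneg_general {n : ℕ} (hn : 2 ≤ n) (G : SimpleGraph (Fin n))
    [DecidableRel G.Adj] (hG : G.Connected) (p : ℝ) :
    0 ≤ ∫ z in Set.Ioi (0 : ℝ), z ^ (p - 1) *
          Real.log (‖(G.adjMatrix ℂ).charpoly.eval (Complex.I * z)‖ /
            (z ^ (n - 2) * (z ^ 2 + (n : ℝ) - 1))) := by
  refine setIntegral_nonneg measurableSet_Ioi fun z (hz : 0 < z) => ?_
  have hn' : (2 : ℝ) ≤ n := by exact_mod_cast hn
  have hden : 0 < z ^ (n - 2) * (z ^ 2 + (n : ℝ) - 1) :=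
    mul_pos (pow_pos hz _) (by nlinarith)
  have hbound := hG.pow_mul_le_norm_eval_charpoly (by simpa using hn) hz
  rw [Fintype.card_fin] at hbound
  exact mul_nonneg (Real.rpow_nonneg hz.le _) (Real.log_nonneg ((one_le_div hden).mpr hbound))

/-- For a connected graph `G` on `n ≥ 2` vertices with characteristic polynomial `f` and
`0 < p < 2`, the integral `∫₀^∞ z^(p-1) log |f(iz) / (z^(n-2)(z² + n - 1))| dz` is
nonnegative. -/
theorem integral_log_ratio_nonneg {n : ℕ} (hn : 2 ≤ n) (G : SimpleGraph (Fin n))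
    [DecidableRel G.Adj] (hG : G.Connected) (p : ℝ) (hp0 : 0 < p) (hp2 : p < 2) :
    0 ≤ ∫ z in Set.Ioi (0 : ℝ), z ^ (p - 1) *
          Real.log (‖(G.adjMatrix ℂ).charpoly.eval (Complex.I * z)‖ /
            (z ^ (n - 2) * (z ^ 2 + (n : ℝ) - 1))) :=
  integral_log_ratio_nonneg_general hn G hG p
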